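/- Let f : ℝ → ℝ be infinitely differentiable and x ∈ ℝ. Then as h → 0⁺, (1/h)·[(1/60)(2f(x−2h) − 13f(x−h) + 47f(x) + 27f(x+h) − 3f(x+2h)) − (1/60)(2f(x−3h) − 13f(x−2h) + 47f(x−h) + 27f(x) − 3f(x+h))] − f′(x) = O(h⁵); that is, the conservative finite difference of the five-point linear flux approximates f′(x) with fifth-order accuracy. -/

import Mathlib

open Filter Asymptotics Topology

private lemma mvt_bigO {g : ℝ → ℝ} (hg : Differentiable ℝ g) (h0 : g 0 = 0) {n : ℕ}
    (hd : (deriv g) =O[𝓝 (0:ℝ)] fun h => h ^ n) :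
    g =O[𝓝 (0:ℝ)] fun h => h ^ (n + 1) := by
  obtain ⟨C, hC⟩ := hd.bound
  rw [Metric.eventually_nhds_iff] at hC
  obtain ⟨ε, hε, hball⟩ := hC
  rw [isBigO_iff]
  refine ⟨|C|, ?_⟩
  rw [Metric.eventually_nhds_iff]
  refine ⟨ε, hε, fun h hh => ?_⟩
  have hh' : |h| < ε := by simpa [Real.dist_eq] using hh
  have key : ‖g h - g 0‖ ≤ (|C| * |h| ^ n) * ‖h - 0‖ := by
    refine Convex.norm_image_sub_le_of_norm_deriv_le
      (fun t _ => hg.differentiableAt) ?_ (convex_Icc (-|h|) |h|) ?_ ?_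
    · intro t ht
      have habs : |t| ≤ |h| := abs_le.2 ⟨ht.1, ht.2⟩
      have hdist : dist t 0 < ε := by
        simpa [Real.dist_eq] using lt_of_le_of_lt habs hh'
      calc ‖deriv g t‖ ≤ C * ‖t ^ n‖ := hball hdist
        _ ≤ |C| * |t| ^ n := by
            rw [Real.norm_eq_abs, abs_pow]
            exact mul_le_mul_of_nonneg_right (le_abs_self C) (by positivity)
        _ ≤ |C| * |h| ^ n := by
            exact mul_le_mul_of_nonneg_left (pow_le_pow_left₀ (abs_nonneg t) habs n)
              (abs_nonneg C)
    · exact ⟨neg_nonpos.2 (abs_nonneg h), abs_nonneg h⟩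
    · exact ⟨neg_abs_le h, le_abs_self h⟩
  rw [h0, sub_zero] at key
  calc ‖g h‖ ≤ (|C| * |h| ^ n) * ‖h - 0‖ := key
    _ = |C| * ‖h ^ (n + 1)‖ := by
        rw [sub_zero, Real.norm_eq_abs, Real.norm_eq_abs, abs_pow, pow_succ]
        ring

private lemma taylor_bigO : ∀ (n : ℕ) (f : ℝ → ℝ), ContDiff ℝ (⊤ : ℕ∞) f → ∀ x : ℝ,
    (fun h : ℝ => f (x + h) - ∑ j ∈ Finset.range (n + 1),
        iteratedDeriv j f x / (j.factorial : ℝ) * h ^ j)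
      =O[𝓝 (0:ℝ)] fun h => h ^ (n + 1) := by
  intro n
  induction n with
  | zero =>
    intro f hf x
    have hdiff : Differentiable ℝ f := hf.differentiable (by simp)
    apply mvt_bigO
    · exact (hdiff.comp (differentiable_id.const_add x)).sub
        (Differentiable.fun_sum fun j _ => (differentiable_pow j).const_mul _)
    · simp
    · have hde : deriv (fun h : ℝ => f (x + h) - ∑ j ∈ Finset.range 1,
          iteratedDeriv j f x / (j.factorial : ℝ) * h ^ j) = fun h => deriv f (x + h) := by
        funext h
        have h1 : HasDerivAt (fun h : ℝ => f (x + h)) (deriv f (x + h)) h := by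
          simpa [Function.comp_def] using (hdiff (x + h)).hasDerivAt.comp h ((hasDerivAt_id h).const_add x)
        have h2 : HasDerivAt (fun h : ℝ => ∑ j ∈ Finset.range 1,
            iteratedDeriv j f x / (j.factorial : ℝ) * h ^ j) 0 h := by
          simpa using (hasDerivAt_const h (iteratedDeriv 0 f x / ((0:ℕ).factorial : ℝ)))
        simpa using (h1.fun_sub h2).deriv
      rw [hde]
      have hcont : ContinuousAt (fun h : ℝ => deriv f (x + h)) 0 := by
        exact ((hf.continuous_deriv (by simp)).comp (continuous_const.add continuous_id)).continuousAt
      have hten : Tendsto (fun h : ℝ => deriv f (x + h)) (𝓝 0) (𝓝 (deriv f (x + 0))) := hcont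
      have hO : (fun h : ℝ => deriv f (x + h)) =O[𝓝 (0:ℝ)] (fun _ => (1:ℝ)) :=
        hten.isBigO_one ℝ
      simpa [pow_zero] using hO
  | succ n ih =>
    intro f hf x
    have hdiff : Differentiable ℝ f := hf.differentiable (by simp)
    have hf' : ContDiff ℝ (⊤ : ℕ∞) (deriv f) := (contDiff_infty_iff_deriv.mp hf).2
    apply mvt_bigO
    · exact (hdiff.comp (differentiable_id.const_add x)).sub
        (Differentiable.fun_sum fun j _ => (differentiable_pow j).const_mul _)
    · simp [Finset.sum_range_succ']
    · have hde : deriv (fun h : ℝ => f (x + h) - ∑ j ∈ Finset.range (n + 2),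
          iteratedDeriv j f x / (j.factorial : ℝ) * h ^ j)
          = fun h => deriv f (x + h) - ∑ j ∈ Finset.range (n + 1),
            iteratedDeriv j (deriv f) x / (j.factorial : ℝ) * h ^ j := by
        funext h
        have h1 : HasDerivAt (fun h : ℝ => f (x + h)) (deriv f (x + h)) h := by
          simpa [Function.comp_def] using (hdiff (x + h)).hasDerivAt.comp h ((hasDerivAt_id h).const_add x)
        have h2 : HasDerivAt (fun h : ℝ => ∑ j ∈ Finset.range (n + 2),
            iteratedDeriv j f x / (j.factorial : ℝ) * h ^ j)
            (∑ j ∈ Finset.range (n + 2),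
              iteratedDeriv j f x / (j.factorial : ℝ) * (j * h ^ (j - 1))) h :=
          HasDerivAt.fun_sum fun j _ => (hasDerivAt_pow j h).const_mul _
        rw [(h1.fun_sub h2).deriv]
        congr 1
        rw [Finset.sum_range_succ']
        simp only [Nat.cast_zero, zero_mul, mul_zero, add_zero]
        refine Finset.sum_congr rfl fun i _ => ?_
        rw [← iteratedDeriv_succ']
        have hfact : ((Nat.factorial (i + 1) : ℕ) : ℝ) = (i + 1) * (Nat.factorial i : ℝ) := by
          push_cast [Nat.factorial_succ]; ring
        have : ((i : ℝ) + 1) ≠ 0 := by positivity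
        field_simp [hfact]
        rw [Nat.add_sub_cancel, hfact]; push_cast
        ring
      rw [hde]
      exact ih (deriv f) hf' x

/-- The five-point linear flux at the right interface of the cell centered at `y`
with mesh size `h`. -/
noncomputable def linearFlux5 (f : ℝ → ℝ) (y h : ℝ) : ℝ :=
  (1/60) * (2 * f (y - 2*h) - 13 * f (y - h) + 47 * f y
    + 27 * f (y + h) - 3 * f (y + 2*h))

/-- The conservative finite difference of the five-point linear flux approximates
`f′(x)` with fifth-order accuracy as `h → 0⁺`. -/
theorem linearFlux5_fifth_order (f : ℝ → ℝ) (hf : ContDiff ℝ (⊤ : ℕ∞) f) (x : ℝ) :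
    (fun h : ℝ => (1/h) * (linearFlux5 f x h - linearFlux5 f (x - h) h) - deriv f x)
      =O[𝓝[>] (0:ℝ)] fun h => h ^ 5 := by
  set R : ℝ → ℝ := fun t => f (x + t) - ∑ j ∈ Finset.range 6,
    iteratedDeriv j f x / (j.factorial : ℝ) * t ^ j with hRdef
  have hR : R =O[𝓝 (0:ℝ)] fun t => t ^ 6 := taylor_bigO 5 f (hf.of_le (by simp)) x
  have hk : ∀ k : ℝ, (fun h : ℝ => R (k * h)) =O[𝓝 (0:ℝ)] fun h => h ^ 6 := by
    intro k
    have ht : Tendsto (fun h : ℝ => k * h) (𝓝 0) (𝓝 (0:ℝ)) := by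
      simpa using (continuous_const.fun_mul continuous_id).tendsto' 0 0 (by simp)
    have h1 := hR.comp_tendsto ht
    simp only [Function.comp_def] at h1
    refine h1.trans ?_
    rw [show (fun h : ℝ => (k * h) ^ 6) = fun h : ℝ => k ^ 6 * h ^ 6 from
      funext fun h => by ring]
    exact isBigO_const_mul_self _ _ _
  have hS : (fun h : ℝ => (-2) * R (-3 * h) + 15 * R (-2 * h) - 60 * R (-1 * h)
      + 30 * R (1 * h) - 3 * R (2 * h)) =O[𝓝 (0:ℝ)] fun h => h ^ 6 := by
    exact ((((((hk (-3)).const_mul_left (-2)).add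
      ((hk (-2)).const_mul_left 15)).sub ((hk (-1)).const_mul_left 60)).add
      ((hk 1).const_mul_left 30)).sub ((hk 2).const_mul_left 3))
  have heq : (fun h : ℝ => (1/h) * (linearFlux5 f x h - linearFlux5 f (x - h) h) - deriv f x)
      =ᶠ[𝓝[>] (0:ℝ)] fun h : ℝ => (1/(60*h)) * ((-2) * R (-3 * h) + 15 * R (-2 * h)
        - 60 * R (-1 * h) + 30 * R (1 * h) - 3 * R (2 * h)) := by
    filter_upwards [self_mem_nhdsWithin] with h hh
    have hne : (h : ℝ) ≠ 0 := ne_of_gt hh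
    have hd1 : deriv f x = iteratedDeriv 1 f x := by rw [iteratedDeriv_one]
    simp only [linearFlux5, hRdef, Finset.sum_range_succ, Finset.sum_range_zero,
      iteratedDeriv_zero, hd1, Nat.factorial]
    push_cast
    field_simp
    ring_nf
  have h6 : (fun h : ℝ => (1/(60*h)) * ((-2) * R (-3 * h) + 15 * R (-2 * h)
      - 60 * R (-1 * h) + 30 * R (1 * h) - 3 * R (2 * h)))
      =O[𝓝[>] (0:ℝ)] fun h => h ^ 5 := by
    have h2 := (isBigO_refl (fun h : ℝ => 1/(60*h)) (𝓝[>] (0:ℝ))).mul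
      (hS.mono nhdsWithin_le_nhds)
    refine h2.trans ?_
    have heq2 : (fun h : ℝ => 1/(60*h) * h ^ 6) =ᶠ[𝓝[>] (0:ℝ)] fun h => (1/60) * h ^ 5 := by
      filter_upwards [self_mem_nhdsWithin] with h hh
      have hne : (h : ℝ) ≠ 0 := ne_of_gt hh
      field_simp
    exact heq2.trans_isBigO (isBigO_const_mul_self _ _ _)
  exact heq.trans_isBigO h6
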